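/- Real-number version of the convergence theorem: let K_c ≥ 0, r ≥ 0, ρ ∈ [−1,1], and suppose for each n the quantities C(T/n) ≥ 0 and γ(T/n) satisfy |γ(T/n)/3| ≤ √(K_c C(T/n)), with K_d(T/n) = K_c + r²T/n − r K_c T/n + C(T/n)/4 − ρ γ(T/n)/3. If C(T/n) → 0 as n → ∞, then K_d(T/n) → K_c. -/

import Mathlib

open Filter Topology

theorem Filter.Tendsto.of_abs_le_sqrt_mul {α : Type*} {l : Filter α} {f g : α → ℝ} (a : ℝ)
    (hf : Tendsto f l (𝓝 0)) (hg : ∀ x, |g x| ≤ √(a * f x)) : Tendsto g l (𝓝 0) := by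
  have hsqrt : Tendsto (fun x => √(a * f x)) l (𝓝 0) := by
    simpa using (hf.const_mul a).sqrt
  exact squeeze_zero_norm hg hsqrt

theorem stmt_12_general (T Kc r ρ : ℝ)
    (C γ Kd : ℕ → ℝ)
    (hγ : ∀ n, |γ n / 3| ≤ Real.sqrt (Kc * C n))
    (hKd : ∀ n : ℕ, Kd n = Kc + r^2*(T/n) - r*Kc*(T/n) + C n/4 - ρ * γ n/3)
    (hC0 : Filter.Tendsto C Filter.atTop (nhds 0)) :
    Filter.Tendsto Kd Filter.atTop (nhds Kc) := by
  have hstep : Tendsto (fun n : ℕ => T / n) atTop (𝓝 0) :=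
    tendsto_const_div_atTop_nhds_zero_nat T
  have hskew : Tendsto (fun n => γ n / 3) atTop (𝓝 0) := hC0.of_abs_le_sqrt_mul Kc hγ
  have hlim := ((((tendsto_const_nhds (x := Kc)).add (hstep.const_mul (r ^ 2))).sub
    (hstep.const_mul (r * Kc))).add (hC0.div_const 4)).sub (hskew.const_mul ρ)
  rw [funext hKd]
  simpa [mul_div_assoc] using hlim

/-- Convergence (real-number version): if `C(T/n) ≥ 0`, `|γ(T/n)/3| ≤ √(K_c C(T/n))`,
`K_d(T/n) = K_c + r²T/n - r K_c T/n + C(T/n)/4 - ρ γ(T/n)/3` and `C(T/n) → 0`,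
then `K_d(T/n) → K_c`. -/
theorem stmt_12 (T Kc r ρ : ℝ) (hT : 0 < T) (hKc : 0 ≤ Kc) (hr : 0 ≤ r)
    (hρ : ρ ∈ Set.Icc (-1:ℝ) 1)
    (C γ Kd : ℕ → ℝ)
    (hCpos : ∀ n, 0 ≤ C n)
    (hγ : ∀ n, |γ n / 3| ≤ Real.sqrt (Kc * C n))
    (hKd : ∀ n : ℕ, Kd n = Kc + r^2*(T/n) - r*Kc*(T/n) + C n/4 - ρ * γ n/3)
    (hC0 : Filter.Tendsto C Filter.atTop (nhds 0)) :
    Filter.Tendsto Kd Filter.atTop (nhds Kc) :=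
  stmt_12_general T Kc r ρ C γ Kd hγ hKd hC0
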